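/- Let d ≥ 1, let Σ be positive definite, θ₀ ∈ ℝ^d with θ₀ ≠ 0, σ > 0, and ε > 0. Define R_L(θ,ε) := ‖θ−θ₀‖²_Σ + σ² + ε²‖θ‖₂² + 2ε√(2/π)·‖θ‖₂·√(‖θ−θ₀‖²_Σ + σ²). Then every global minimizer θ* of R_L(·,ε) satisfies θ* ≠ θ₀; consequently the standard (non-adversarial) risk of θ* is strictly larger than that of θ₀: R_L(θ*,0) = ‖θ*−θ₀‖²_Σ + σ² > σ² = R_L(θ₀,0). -/

import Mathlib

/-!
Shrinking `θ₀` along `t ↦ (1 - t) • θ₀` lowers both adversarial terms `ε²‖θ‖²` and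
`2ε√(2/π)‖θ‖√(‖θ-θ₀‖²_Σ + σ²)` to first order in `t`, while `‖θ-θ₀‖²_Σ = t²‖θ₀‖²_Σ` grows only to
second order and, because `σ > 0`, so does the square root. Hence the derivative of the risk
along this ray is negative at `t = 0`, `θ₀` is not a minimizer, and positive definiteness of `Σ`
turns `θ* ≠ θ₀` into a strictly larger standard risk.
-/

open MeasureTheory ProbabilityTheory Real Filter Matrix
open scoped RealInnerProductSpace BigOperators NNReal ENNReal Topology

noncomputable section

/-- The Σ-quadratic form `aᵀ Σ a`. -/
def quadForm {d : ℕ} (S : Matrix (Fin d) (Fin d) ℝ) (a : EuclideanSpace ℝ (Fin d)) : ℝ :=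
  ∑ i, ∑ j, a i * S i j * a j

/-- The population adversarial risk of the linear model `f_θ(x) = θᵀx` under squared loss
and `L2` attacks of strength `ε`, for `x ~ N(0,Σ)` and `y = θ₀ᵀx + w`, `w ~ N(0,σ²)`:
`R_L(θ,ε) = ‖θ−θ₀‖²_Σ + σ² + ε²‖θ‖₂² + 2ε√(2/π)‖θ‖₂√(‖θ−θ₀‖²_Σ + σ²)`. -/
def RL {d : ℕ} (S : Matrix (Fin d) (Fin d) ℝ) (θ0 : EuclideanSpace ℝ (Fin d))
    (σ ε : ℝ) (θ : EuclideanSpace ℝ (Fin d)) : ℝ :=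
  quadForm S (θ - θ0) + σ ^ 2 + ε ^ 2 * ‖θ‖ ^ 2 +
    2 * ε * Real.sqrt (2 / Real.pi) * ‖θ‖ * Real.sqrt (quadForm S (θ - θ0) + σ ^ 2)

section
variable {d : ℕ} (S : Matrix (Fin d) (Fin d) ℝ)

lemma quadForm_smul (c : ℝ) (a : EuclideanSpace ℝ (Fin d)) :
    quadForm S (c • a) = c ^ 2 * quadForm S a := by
  simp only [quadForm, PiLp.smul_apply, smul_eq_mul, Finset.mul_sum]
  exact Finset.sum_congr rfl fun i _ => Finset.sum_congr rfl fun j _ => by ring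

lemma quadForm_zero : quadForm S 0 = 0 := by
  simpa using quadForm_smul S 0 0

lemma quadForm_pos {S : Matrix (Fin d) (Fin d) ℝ} (hS : S.PosDef)
    {a : EuclideanSpace ℝ (Fin d)} (ha : a ≠ 0) : 0 < quadForm S a := by
  have hpos := hS.dotProduct_mulVec_pos (x := a.ofLp) (by simpa using ha)
  simpa [quadForm, dotProduct, mulVec, Finset.mul_sum, mul_assoc] using hpos

variable (θ0 : EuclideanSpace ℝ (Fin d)) (σ : ℝ)

lemma RL_zero (θ : EuclideanSpace ℝ (Fin d)) :
    RL S θ0 σ 0 θ = quadForm S (θ - θ0) + σ ^ 2 := by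
  simp [RL]

lemma RL_one_sub_smul_self (ε : ℝ) {t : ℝ} (ht : t ≤ 1) :
    RL S θ0 σ ε ((1 - t) • θ0) =
      t ^ 2 * quadForm S θ0 + σ ^ 2 + ε ^ 2 * ((1 - t) * ‖θ0‖) ^ 2 +
        2 * ε * √(2 / π) * ((1 - t) * ‖θ0‖) * √(t ^ 2 * quadForm S θ0 + σ ^ 2) := by
  have hsub : (1 - t) • θ0 - θ0 = (-t) • θ0 := by module
  rw [RL, hsub, quadForm_smul, neg_sq, norm_smul, Real.norm_of_nonneg (by linarith)]

end

lemma hasDerivAt_shrinkage_risk_zero (q n σ ε c : ℝ) (hσ : 0 < σ) :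
    HasDerivAt (fun t => t ^ 2 * q + σ ^ 2 + ε ^ 2 * ((1 - t) * n) ^ 2 +
        c * ((1 - t) * n) * √(t ^ 2 * q + σ ^ 2))
      (-(2 * ε ^ 2 * n ^ 2 + c * n * σ)) 0 := by
  have hin : HasDerivAt (fun t : ℝ => t ^ 2 * q + σ ^ 2) 0 0 := by
    simpa using ((hasDerivAt_pow 2 (0:ℝ)).mul_const q).add_const (σ ^ 2)
  have hsq := hin.sqrt (by simp [hσ.ne'])
  have hlin : HasDerivAt (fun t : ℝ => (1 - t) * n) (-n) 0 := by
    simpa using ((hasDerivAt_id (0:ℝ)).const_sub 1).mul_const n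
  have := ((hin.add ((hlin.pow 2).const_mul (ε ^ 2))).add ((hlin.const_mul c).mul hsq))
  refine this.congr_deriv ?_
  rw [show (0:ℝ) ^ 2 * q + σ ^ 2 = σ ^ 2 by ring, Real.sqrt_sq hσ.le]
  ring

lemma exists_RL_lt_RL_self {d : ℕ} (S : Matrix (Fin d) (Fin d) ℝ) {θ0 : EuclideanSpace ℝ (Fin d)}
    (hθ0 : θ0 ≠ 0) {σ ε : ℝ} (hσ : 0 < σ) (hε : 0 < ε) :
    ∃ θ, RL S θ0 σ ε θ < RL S θ0 σ ε θ0 := by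
  by_contra! hmin
  have hloc : IsLocalMin (fun t : ℝ => RL S θ0 σ ε ((1 - t) • θ0)) 0 := by
    refine Filter.Eventually.of_forall fun t => ?_
    simpa only [sub_zero, one_smul] using hmin ((1 - t) • θ0)
  have hloc_profile := hloc.congr (Filter.mem_of_superset (Iio_mem_nhds one_pos)
    fun t ht => RL_one_sub_smul_self S θ0 σ ε (le_of_lt ht))
  have hderiv := hloc_profile.hasDerivAt_eq_zero
    (hasDerivAt_shrinkage_risk_zero (quadForm S θ0) ‖θ0‖ σ ε (2 * ε * √(2 / π)) hσ)
  have hn : 0 < ‖θ0‖ := norm_pos_iff.mpr hθ0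
  have hk : 0 < √(2 / π) := Real.sqrt_pos.mpr (by positivity)
  have : 0 < 2 * ε ^ 2 * ‖θ0‖ ^ 2 + 2 * ε * √(2 / π) * ‖θ0‖ * σ := by positivity
  linarith

theorem adversarial_training_hurts_standard_risk
    {d : ℕ} (S : Matrix (Fin d) (Fin d) ℝ) (hS : S.PosDef)
    (θ0 : EuclideanSpace ℝ (Fin d)) (hθ0 : θ0 ≠ 0) (σ ε : ℝ) (hσ : 0 < σ) (hε : 0 < ε)
    (θs : EuclideanSpace ℝ (Fin d))
    (hmin : ∀ θ : EuclideanSpace ℝ (Fin d), RL S θ0 σ ε θs ≤ RL S θ0 σ ε θ) :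
    θs ≠ θ0 ∧
    RL S θ0 σ 0 θs = quadForm S (θs - θ0) + σ ^ 2 ∧
    RL S θ0 σ 0 θ0 = σ ^ 2 ∧
    RL S θ0 σ 0 θ0 < RL S θ0 σ 0 θs := by
  have hne : θs ≠ θ0 := by
    rintro rfl
    obtain ⟨θ, hθ⟩ := exists_RL_lt_RL_self S hθ0 hσ hε
    exact (hmin θ).not_gt hθ
  have hθ0_risk : RL S θ0 σ 0 θ0 = σ ^ 2 := by rw [RL_zero, sub_self, quadForm_zero, zero_add]
  refine ⟨hne, RL_zero S θ0 σ θs, hθ0_risk, ?_⟩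
  rw [hθ0_risk, RL_zero]
  linarith [quadForm_pos hS (sub_ne_zero.mpr hne)]

end
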